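/- arXiv:1512.02376 — 2 statements merged into one kernel-verified Lean document; each statement's English description precedes it below -/
import Mathlib

section
/- The initial ideal of I_{D_{2m}} with respect to ≻^even is generated by squarefree monomials; explicitly, it is generated by the monomials x_{i,k}x_{j,ℓ} and x_{i,ℓ}x_{j,k} (i<j<k<ℓ in J), x_{i,j}x_{i,k}, x_j x_{i,k}, x_k x_{i,j}, x_{j,k}y_i, x_{i,k}y_j (i<j<k in J), x_i x_j, x_j y_i, x_{i,j}y_i, x_{i,j}x_1 x_n (i<j in J), and x_i x_1 x_n (i in J), each of which is a squarefree monomial. -/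
open MvPolynomial

/-- Index type for the variables of the polynomial ring `R` in the `D_{2m}` case (`n = 2m`).
The set `J = {3,5,…,n-1}` of odd integers is realised as `{2t+3 | t : Fin (m-1)}` and
`J^c = {2,4,…,n-2}` as `{2t+2 | t : Fin (m-1)}`.  The constructors are:
`x1 ↦ x_1`, `xn ↦ x_n`, `xJ t ↦ x_{2t+3}` (`2t+3 ∈ J`), `xJc t ↦ x_{2t+2}` (`2t+2 ∈ J^c`),
`xP s t _ ↦ x_{2s+3,2t+3}` (a pair `k < ℓ` in `J`), `y t ↦ y_{2t+3}`. -/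
inductive DVar (m : ℕ) : Type where
  | x1 : DVar m
  | xn : DVar m
  | xJ : Fin (m - 1) → DVar m
  | xJc : Fin (m - 1) → DVar m
  | xP : (s t : Fin (m - 1)) → s < t → DVar m
  | y : Fin (m - 1) → DVar m

/-- The images of the variables under `π`, where `u_i = X i` inside
`K[u_1,…,u_n] ⊆ MvPolynomial ℕ K`:
`π(x_1) = u_1²`, `π(x_n) = u_n²` (`n = 2m`), `π(x_i) = u_i²` for `i ∈ J`,
`π(x_j) = u_j` for `j ∈ J^c`, `π(x_{k,ℓ}) = u_k u_ℓ` for `k < ℓ` in `J`, and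
`π(y_i) = u_i u_1 u_n` for `i ∈ J`. -/
noncomputable def dImage (K : Type*) [Field K] (m : ℕ) : DVar m → MvPolynomial ℕ K
  | .x1 => X 1 ^ 2
  | .xn => X (2 * m) ^ 2
  | .xJ t => X (2 * t.val + 3) ^ 2
  | .xJc t => X (2 * t.val + 2)
  | .xP s t _ => X (2 * s.val + 3) * X (2 * t.val + 3)
  | .y t => X (2 * t.val + 3) * X 1 * X (2 * m)

/-- The toric map `π : R → K[u_1,…,u_n]` for the `D_{2m}` configuration. -/
noncomputable def piD (K : Type*) [Field K] (m : ℕ) :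
    MvPolynomial (DVar m) K →ₐ[K] MvPolynomial ℕ K :=
  aeval (dImage K m)

/-- The set `𝒢_{D_{2m}}` of binomials. -/
noncomputable def GD (K : Type*) [Field K] (m : ℕ) : Set (MvPolynomial (DVar m) K) :=
  {g | (∃ (i j k l : Fin (m - 1)) (hij : i < j) (hjk : j < k) (hkl : k < l),
          g = X (DVar.xP i k (hij.trans hjk)) * X (DVar.xP j l (hjk.trans hkl))
              - X (DVar.xP i j hij) * X (DVar.xP k l hkl) ∨
          g = X (DVar.xP i l (hij.trans (hjk.trans hkl))) * X (DVar.xP j k hjk)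
              - X (DVar.xP i j hij) * X (DVar.xP k l hkl)) ∨
      (∃ (i j k : Fin (m - 1)) (hij : i < j) (hjk : j < k),
          g = X (DVar.xP i j hij) * X (DVar.xP i k (hij.trans hjk))
              - X (DVar.xJ i) * X (DVar.xP j k hjk) ∨
          g = X (DVar.xJ j) * X (DVar.xP i k (hij.trans hjk))
              - X (DVar.xP i j hij) * X (DVar.xP j k hjk) ∨
          g = X (DVar.xJ k) * X (DVar.xP i j hij)
              - X (DVar.xP i k (hij.trans hjk)) * X (DVar.xP j k hjk) ∨
          g = X (DVar.xP j k hjk) * X (DVar.y i)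
              - X (DVar.xP i j hij) * X (DVar.y k) ∨
          g = X (DVar.xP i k (hij.trans hjk)) * X (DVar.y j)
              - X (DVar.xP i j hij) * X (DVar.y k)) ∨
      (∃ (i j : Fin (m - 1)) (hij : i < j),
          g = X (DVar.xJ i) * X (DVar.xJ j) - X (DVar.xP i j hij) ^ 2 ∨
          g = X (DVar.xJ j) * X (DVar.y i) - X (DVar.xP i j hij) * X (DVar.y j) ∨
          g = X (DVar.xP i j hij) * X (DVar.y i) - X (DVar.xJ i) * X (DVar.y j) ∨
          g = X (DVar.xP i j hij) * X DVar.x1 * X DVar.xn - X (DVar.y i) * X (DVar.y j)) ∨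
      (∃ i : Fin (m - 1),
          g = X (DVar.xJ i) * X DVar.x1 * X DVar.xn - X (DVar.y i) ^ 2)}

/-- `degRevLexLT rank a b` : the exponent vector `a` is strictly smaller than `b` in the
(degree) reverse lexicographic order determined by the ranking `rank` of the variables
(smaller rank = greater variable): `a ≺ b` iff `a` has smaller total degree, or the total
degrees agree and in the least variable (i.e. largest rank) where they differ, `a` has the
larger exponent. -/
def degRevLexLT {σ : Type*} (rank : σ → ℕ) (a b : σ →₀ ℕ) : Prop :=
  (a.sum fun _ e => e) < (b.sum fun _ e => e) ∨
    ((a.sum fun _ e => e) = (b.sum fun _ e => e) ∧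
      ∃ v, b v < a v ∧ ∀ w, rank v < rank w → a w = b w)

/-- `IsLeadExp lt f d` : `d` is the exponent vector of the leading monomial of `f` with
respect to the strict term order `lt`. -/
def IsLeadExp {σ K : Type*} [Field K] (lt : (σ →₀ ℕ) → (σ →₀ ℕ) → Prop)
    (f : MvPolynomial σ K) (d : σ →₀ ℕ) : Prop :=
  d ∈ f.support ∧ ∀ e ∈ f.support, e ≠ d → lt e d

/-- The ideal of leading monomials (initial ideal) of an ideal `I` with respect to the
strict term order `lt`. -/
noncomputable def initialIdeal {σ K : Type*} [Field K] (lt : (σ →₀ ℕ) → (σ →₀ ℕ) → Prop)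
    (I : Ideal (MvPolynomial σ K)) : Ideal (MvPolynomial σ K) :=
  Ideal.span {p | ∃ f ∈ I, f ≠ 0 ∧ ∃ d, IsLeadExp lt f d ∧ p = monomial d (1 : K)}

/-- The ranking of the variables realising the variable order
`x_1 ≻ x_2 ≻ ⋯ ≻ x_n ≻ x_{j1,j2} ≻ x_{j3,j4} ≻ y_{k1} ≻ y_{k2}` (where `x_{j1,j2} ≻ x_{j3,j4}`
iff `j2 < j4`, or `j2 = j4` and `j1 < j3`, and `y_{k1} ≻ y_{k2}` iff `k1 < k2`); a smaller
rank means a greater variable. -/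
def rankD (m : ℕ) : DVar m → ℕ
  | .x1 => 1
  | .xn => 2 * m
  | .xJ t => 2 * t.val + 3
  | .xJc t => 2 * t.val + 2
  | .xP s t _ => 2 * m + 1 + t.val * (2 * m) + s.val
  | .y t => 10 * m * m + 10 * m + t.val

/-- The reverse lexicographic term order `≻^even` (as a strict "smaller-than" relation on
exponent vectors). -/
def precEven (m : ℕ) : (DVar m →₀ ℕ) → (DVar m →₀ ℕ) → Prop :=
  degRevLexLT (rankD m)

/-- The set `in(𝒢_{D_{2m}})` of the first-written monomials of the binomials of `𝒢_{D_{2m}}`. -/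
noncomputable def inGD (K : Type*) [Field K] (m : ℕ) : Set (MvPolynomial (DVar m) K) :=
  {g | (∃ (i j k l : Fin (m - 1)) (hij : i < j) (hjk : j < k) (hkl : k < l),
          g = X (DVar.xP i k (hij.trans hjk)) * X (DVar.xP j l (hjk.trans hkl)) ∨
          g = X (DVar.xP i l (hij.trans (hjk.trans hkl))) * X (DVar.xP j k hjk)) ∨
      (∃ (i j k : Fin (m - 1)) (hij : i < j) (hjk : j < k),
          g = X (DVar.xP i j hij) * X (DVar.xP i k (hij.trans hjk)) ∨
          g = X (DVar.xJ j) * X (DVar.xP i k (hij.trans hjk)) ∨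
          g = X (DVar.xJ k) * X (DVar.xP i j hij) ∨
          g = X (DVar.xP j k hjk) * X (DVar.y i) ∨
          g = X (DVar.xP i k (hij.trans hjk)) * X (DVar.y j)) ∨
      (∃ (i j : Fin (m - 1)) (hij : i < j),
          g = X (DVar.xJ i) * X (DVar.xJ j) ∨
          g = X (DVar.xJ j) * X (DVar.y i) ∨
          g = X (DVar.xP i j hij) * X (DVar.y i) ∨
          g = X (DVar.xP i j hij) * X DVar.x1 * X DVar.xn) ∨
      (∃ i : Fin (m - 1),
          g = X (DVar.xJ i) * X DVar.x1 * X DVar.xn)}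

/-!
The binomials of `𝒢_{D_{2m}}` lie in the toric ideal and their first-written terms lead, which
gives `in(𝒢) ⊆ in(I)`. For the converse call a monomial standard if no monomial of `in(𝒢)`
divides it. Two standard monomials with the same image under `π` always share a variable
(read off from the largest odd index `i` with `u_i` in the common image), so cancelling it and
inducting on the degree shows that they are equal. As the fibres of `π` are finite and a
non-standard monomial can be lowered inside its fibre by a binomial of `𝒢`, the standard
monomial of a fibre is its least element. The leading monomial of a nonzero `f ∈ I` shares its
image with a smaller monomial of `f`, hence is not standard, i.e. lies in `in(𝒢)`.
-/

open Finsupp Function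

namespace Finsupp

variable {σ τ : Type*} (w : σ → τ →₀ ℕ)

theorem weight_apply_apply (d : σ →₀ ℕ) (c : τ) : weight w d c = weight (fun v => w v c) d := by
  simp [weight_apply, Finsupp.sum_apply]

theorem le_weight_apply (d : σ →₀ ℕ) {v : σ} {c : τ} (h : 0 < w v c) : d v ≤ weight w d c :=
  weight_apply_apply w d c ▸ le_weight (fun v => w v c) h.ne' d

theorem weight_apply_pos {d : σ →₀ ℕ} {v : σ} {c : τ} (hv : 0 < d v) (hw : 0 < w v c) :
    0 < weight w d c :=
  hv.trans_le (le_weight_apply w d hw)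

theorem exists_pos_of_weight_apply_pos {d : σ →₀ ℕ} {c : τ} (h : 0 < weight w d c) :
    ∃ v, 0 < d v ∧ 0 < w v c := by
  rw [weight_apply_apply, weight_apply, Finsupp.sum, Finset.sum_pos_iff] at h
  obtain ⟨v, -, hv⟩ := h
  exact ⟨v, Nat.pos_of_mul_pos_right hv, Nat.pos_of_mul_pos_left hv⟩

theorem degree_le_degree_weight (hw : ∀ v, w v ≠ 0) (d : σ →₀ ℕ) :
    degree d ≤ degree (weight w d) :=
  calc degree d = d.sum fun _ k => k := rfl
    _ ≤ d.sum fun v k => k • degree (w v) := Finset.sum_le_sum fun v _ =>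
      Nat.le_mul_of_pos_right _ (Nat.pos_of_ne_zero (by simpa [degree_eq_zero_iff] using hw v))
    _ = degree (weight w d) := by rw [weight_apply, map_finsuppSum]; simp

theorem finite_setOf_weight_eq [Finite σ] (hw : ∀ v, w v ≠ 0) (x : τ →₀ ℕ) :
    {d : σ →₀ ℕ | weight w d = x}.Finite :=
  (finite_of_degree_le (degree x)).subset fun d hd => hd ▸ degree_le_degree_weight w hw d

end Finsupp

namespace MvPolynomial

variable {σ τ R : Type*} [CommSemiring R]

theorem X_mul_X (a b : σ) : X a * X b = monomial (single a 1 + single b 1) (1 : R) := by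
  rw [X, X, monomial_mul, mul_one]

theorem X_mul_X_mul_X (a b c : σ) :
    X a * X b * X c = monomial (single a 1 + single b 1 + single c 1) (1 : R) := by
  rw [X_mul_X, X, monomial_mul, mul_one]

theorem aeval_monomial_monomial (w : σ → τ →₀ ℕ) (d : σ →₀ ℕ) (r : R) :
    aeval (fun v => monomial (w v) (1 : R)) (monomial d r) = monomial (weight w d) r := by
  rw [aeval_monomial, weight_apply, monomial_finsupp_sum_index, algebraMap_eq]
  simp only [monomial_pow, one_pow]

theorem exists_weight_eq_of_aeval_eq_zero (w : σ → τ →₀ ℕ) {f : MvPolynomial σ R}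
    (hf : aeval (fun v => monomial (w v) (1 : R)) f = 0) {d : σ →₀ ℕ} (hd : d ∈ f.support) :
    ∃ e ∈ f.support, e ≠ d ∧ weight w e = weight w d := by
  classical
  by_contra! h
  have hcoeff : coeff (weight w d) (aeval (fun v => monomial (w v) (1 : R)) f) = coeff d f := by
    conv_lhs => rw [f.as_sum, map_sum]
    simp only [aeval_monomial_monomial, coeff_sum, coeff_monomial]
    rw [Finset.sum_eq_single d (fun e he hed => if_neg (h e he hed)) (fun hd' => absurd hd hd'),
      if_pos rfl]
  rw [hf, coeff_zero] at hcoeff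
  exact mem_support_iff.mp hd hcoeff.symm

end MvPolynomial

theorem Set.Finite.not_rel_of_descent {α : Type*} {r : α → α → Prop} [IsStrictOrder α r]
    {s : Set α} (hs : s.Finite) {P : α → Prop} (hdesc : ∀ x ∈ s, ¬P x → ∃ y ∈ s, r y x)
    (huniq : ∀ x ∈ s, ∀ y ∈ s, P x → P y → x = y) {a b : α} (ha : a ∈ s) (hPa : P a)
    (hb : b ∈ s) : ¬r b a := by
  refine (hs.wellFoundedOn (r := r)).induction hb (P := fun x => ¬r x a) fun x hx ih hxa => ?_
  by_cases hPx : P x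
  · exact (irrefl a : ¬r a a) (huniq x hx a ha hPx hPa ▸ hxa)
  · obtain ⟨y, hy, hyx⟩ := hdesc x hx hPx
    exact ih y hy hyx (_root_.trans hyx hxa)

section DegRevLex

variable {σ : Type*} {rank : σ → ℕ}

theorem degRevLexLT_irrefl (a : σ →₀ ℕ) : ¬degRevLexLT rank a a := by
  rintro (h | ⟨-, v, hv, -⟩)
  exacts [lt_irrefl _ h, lt_irrefl _ hv]

theorem degRevLexLT_trans (hr : Injective rank) {a b c : σ →₀ ℕ} (hab : degRevLexLT rank a b)
    (hbc : degRevLexLT rank b c) : degRevLexLT rank a c := by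
  rcases hab with hab | ⟨hab, v, hv, hva⟩ <;> rcases hbc with hbc | ⟨hbc, w, hw, hwa⟩
  · exact .inl (hab.trans hbc)
  · exact .inl (hbc ▸ hab)
  · exact .inl (hab ▸ hbc)
  refine .inr ⟨hab.trans hbc, ?_⟩
  rcases lt_trichotomy (rank v) (rank w) with hvw | hvw | hvw
  · exact ⟨w, hva w hvw ▸ hw, fun u hu => (hva u (hvw.trans hu)).trans (hwa u hu)⟩
  · obtain rfl := hr hvw
    exact ⟨v, hv.trans' hw, fun u hu => (hva u hu).trans (hwa u hu)⟩
  · exact ⟨v, hwa v hvw ▸ hv, fun u hu => (hva u hu).trans (hwa u (hvw.trans hu))⟩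

theorem isStrictOrder_degRevLexLT (hr : Injective rank) :
    IsStrictOrder (σ →₀ ℕ) (degRevLexLT rank) where
  irrefl := degRevLexLT_irrefl
  trans _ _ _ := degRevLexLT_trans hr

theorem degRevLexLT.add_left {a b : σ →₀ ℕ} (h : degRevLexLT rank a b) (c : σ →₀ ℕ) :
    degRevLexLT rank (c + a) (c + b) := by
  change degree a < degree b ∨ degree a = degree b ∧ _ at h
  change degree (c + a) < degree (c + b) ∨ degree (c + a) = degree (c + b) ∧ _
  rcases h with h | ⟨h, v, hv, hva⟩
  · exact .inl (by simpa using h)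
  · exact .inr ⟨by simp [h], v, by simpa using hv, fun u hu => by simp [hva u hu]⟩

theorem degRevLexLT_of_degree_lt {a b : σ →₀ ℕ} (h : degree a < degree b) :
    degRevLexLT rank a b :=
  .inl h

theorem degRevLexLT_pair {a b c e : σ} (hac : rank a < rank c) (hbc : rank b < rank c)
    (hec : rank e ≤ rank c) :
    degRevLexLT rank (single e 1 + single c 1) (single a 1 + single b 1) := by
  classical
  have hne {x y : σ} (h : rank x < rank y) : x ≠ y := fun hxy => h.ne (congrArg rank hxy)
  refine .inr ⟨show degree _ = degree _ by simp, c, by simp [single_apply, hne hac, hne hbc], ?_⟩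
  intro u hu
  simp [hne (hac.trans hu), hne (hbc.trans hu), hne hu, hne (hec.trans_lt hu)]

end DegRevLex

section IsLeadExp

variable {σ K : Type*} [Field K] {lt : (σ →₀ ℕ) → (σ →₀ ℕ) → Prop}

theorem isLeadExp_monomial_sub_monomial {g g' : σ →₀ ℕ} (hne : g' ≠ g) (hlt : lt g' g) :
    IsLeadExp lt (monomial g (1 : K) - monomial g' 1) g := by
  classical
  refine ⟨by simp [coeff_monomial, hne], fun e he heg => ?_⟩
  obtain rfl : e = g' := by
    by_contra heg'
    simp [coeff_monomial, Ne.symm heg, Ne.symm heg'] at he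
  exact hlt

theorem IsLeadExp.ne_zero {f : MvPolynomial σ K} {d : σ →₀ ℕ} (h : IsLeadExp lt f d) :
    f ≠ 0 := by
  rintro rfl
  simpa using h.1

end IsLeadExp

namespace DVar

variable {m : ℕ}

theorem rankD_xP_lt_rankD_xP_iff {s t s' t' : Fin (m - 1)} (h : s < t) (h' : s' < t') :
    rankD m (xP s t h) < rankD m (xP s' t' h') ↔ t < t' ∨ t = t' ∧ s < s' := by
  have step {a b : ℕ} (hab : a < b) : a * (2 * m) + 2 * m ≤ b * (2 * m) := by
    rw [← Nat.succ_mul]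
    exact Nat.mul_le_mul_right _ hab
  simp only [rankD, Fin.lt_def, Fin.ext_iff]
  rcases lt_trichotomy t.val t'.val with htt | htt | htt
  · have := step htt
    omega
  · rw [htt]
    omega
  · have := step htt
    omega

theorem rankD_xP_lt_rankD_y {s t : Fin (m - 1)} (h : s < t) (u : Fin (m - 1)) :
    rankD m (xP s t h) < rankD m (y u) := by
  have := Nat.mul_le_mul_right (2 * m) (show t.val + 1 ≤ m by omega)
  rw [Nat.succ_mul] at this
  have : 10 * m * m = 5 * (m * (2 * m)) := by ring
  simp only [rankD]
  omega

theorem rankD_xJ_lt_rankD_xP (u : Fin (m - 1)) {s t : Fin (m - 1)} (h : s < t) :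
    rankD m (xJ u) < rankD m (xP s t h) := by
  simp only [rankD]
  omega

theorem rankD_xJ_lt_rankD_y (t u : Fin (m - 1)) : rankD m (xJ t) < rankD m (y u) := by
  simp only [rankD]
  omega

theorem rankD_y_lt_rankD_y_iff {t u : Fin (m - 1)} : rankD m (y t) < rankD m (y u) ↔ t < u := by
  simp only [rankD, Fin.lt_def]
  omega

theorem rankD_injective : Injective (rankD m) := by
  intro v w h
  rcases v with _ | _ | t | t | ⟨s, t, hst⟩ | t <;>
    rcases w with _ | _ | t' | t' | ⟨s', t', hst'⟩ | t'
  all_goals first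
    | rfl
    | (simp only [rankD, reduceCtorEq, xJ.injEq, xJc.injEq, y.injEq, Fin.ext_iff] at h ⊢; omega)
    | skip
  case xP.xP =>
    have h₁ := mt (rankD_xP_lt_rankD_xP_iff hst hst').mpr h.not_lt
    have h₂ := mt (rankD_xP_lt_rankD_xP_iff hst' hst).mpr h.symm.not_lt
    obtain ⟨rfl, rfl⟩ : s = s' ∧ t = t' := by omega
    rfl
  case xP.y => exact absurd h (rankD_xP_lt_rankD_y hst t').ne
  case y.xP => exact absurd h (rankD_xP_lt_rankD_y hst' t).ne'

theorem rankD_lt (v : DVar m) : rankD m v < 10 * m * m + 11 * m + 2 := by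
  rcases v with _ | _ | t | t | ⟨s, t, hst⟩ | t
  case xP => have := rankD_xP_lt_rankD_y hst t; simp only [rankD] at this ⊢; omega
  all_goals simp only [rankD]; omega

instance : Finite (DVar m) :=
  Finite.of_injective (fun v => (⟨rankD m v, rankD_lt v⟩ : Fin (10 * m * m + 11 * m + 2)))
    fun _ _ h => rankD_injective (Fin.mk.inj_iff.mp h)

noncomputable def piExp (m : ℕ) : DVar m → ℕ →₀ ℕ
  | x1 => single 1 2
  | xn => single (2 * m) 2
  | xJ t => single (2 * t.val + 3) 2
  | xJc t => single (2 * t.val + 2) 1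
  | xP s t _ => single (2 * s.val + 3) 1 + single (2 * t.val + 3) 1
  | y t => single (2 * t.val + 3) 1 + single 1 1 + single (2 * m) 1

theorem piExp_ne_zero (v : DVar m) : piExp m v ≠ 0 := by
  cases v <;> exact fun h => by simpa [piExp] using congrArg degree h

theorem dImage_eq_monomial (K : Type*) [Field K] :
    dImage K m = fun v => monomial (piExp m v) 1 := by
  funext v
  cases v <;> simp [dImage, piExp, X, monomial_mul, monomial_pow, smul_single]

theorem piD_monomial {K : Type*} [Field K] (d : DVar m →₀ ℕ) (c : K) :
    piD K m (monomial d c) = monomial (weight (piExp m) d) c := by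
  rw [piD, dImage_eq_monomial, aeval_monomial_monomial]

/-- `IsGDBinomial m g g'`: `x^g - x^g'` is a binomial of `𝒢_{D_{2m}}`, with `x^g` written first. -/
inductive IsGDBinomial (m : ℕ) : (DVar m →₀ ℕ) → (DVar m →₀ ℕ) → Prop
  | ik_jl {i j k l : Fin (m - 1)} (hij : i < j) (hjk : j < k) (hkl : k < l) :
      IsGDBinomial m (single (xP i k (hij.trans hjk)) 1 + single (xP j l (hjk.trans hkl)) 1)
        (single (xP i j hij) 1 + single (xP k l hkl) 1)
  | il_jk {i j k l : Fin (m - 1)} (hij : i < j) (hjk : j < k) (hkl : k < l) :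
      IsGDBinomial m (single (xP i l (hij.trans (hjk.trans hkl))) 1 + single (xP j k hjk) 1)
        (single (xP i j hij) 1 + single (xP k l hkl) 1)
  | ij_ik {i j k : Fin (m - 1)} (hij : i < j) (hjk : j < k) :
      IsGDBinomial m (single (xP i j hij) 1 + single (xP i k (hij.trans hjk)) 1)
        (single (xJ i) 1 + single (xP j k hjk) 1)
  | j_ik {i j k : Fin (m - 1)} (hij : i < j) (hjk : j < k) :
      IsGDBinomial m (single (xJ j) 1 + single (xP i k (hij.trans hjk)) 1)
        (single (xP i j hij) 1 + single (xP j k hjk) 1)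
  | k_ij {i j k : Fin (m - 1)} (hij : i < j) (hjk : j < k) :
      IsGDBinomial m (single (xJ k) 1 + single (xP i j hij) 1)
        (single (xP i k (hij.trans hjk)) 1 + single (xP j k hjk) 1)
  | jk_yi {i j k : Fin (m - 1)} (hij : i < j) (hjk : j < k) :
      IsGDBinomial m (single (xP j k hjk) 1 + single (y i) 1)
        (single (xP i j hij) 1 + single (y k) 1)
  | ik_yj {i j k : Fin (m - 1)} (hij : i < j) (hjk : j < k) :
      IsGDBinomial m (single (xP i k (hij.trans hjk)) 1 + single (y j) 1)
        (single (xP i j hij) 1 + single (y k) 1)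
  | i_j {i j : Fin (m - 1)} (hij : i < j) :
      IsGDBinomial m (single (xJ i) 1 + single (xJ j) 1)
        (single (xP i j hij) 1 + single (xP i j hij) 1)
  | j_yi {i j : Fin (m - 1)} (hij : i < j) :
      IsGDBinomial m (single (xJ j) 1 + single (y i) 1) (single (xP i j hij) 1 + single (y j) 1)
  | ij_yi {i j : Fin (m - 1)} (hij : i < j) :
      IsGDBinomial m (single (xP i j hij) 1 + single (y i) 1) (single (xJ i) 1 + single (y j) 1)
  | ij_1n {i j : Fin (m - 1)} (hij : i < j) :
      IsGDBinomial m (single (xP i j hij) 1 + single x1 1 + single xn 1)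
        (single (y i) 1 + single (y j) 1)
  | i_1n (i : Fin (m - 1)) :
      IsGDBinomial m (single (xJ i) 1 + single x1 1 + single xn 1) (single (y i) 1 + single (y i) 1)

namespace IsGDBinomial

variable {g g' : DVar m →₀ ℕ}

theorem weight_eq (h : IsGDBinomial m g g') : weight (piExp m) g = weight (piExp m) g' := by
  have single_two (c : ℕ) : (single c 2 : ℕ →₀ ℕ) = single c 1 + single c 1 := by
    rw [← single_add]
  cases h <;> simp only [map_add, weight_single, one_smul, piExp, single_two] <;> abel

theorem lt (h : IsGDBinomial m g g') : precEven m g' g := by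
  cases h
  case ij_1n | i_1n => exact degRevLexLT_of_degree_lt (by simp)
  -- the last-written variable of each trailing term is the least variable of both terms
  case i_j hij =>
    exact degRevLexLT_pair (rankD_xJ_lt_rankD_xP _ hij) (rankD_xJ_lt_rankD_xP _ hij) le_rfl
  all_goals
    refine degRevLexLT_pair ?_ ?_ (le_of_lt ?_) <;>
    simp only [rankD_xP_lt_rankD_xP_iff, rankD_xP_lt_rankD_y, rankD_xJ_lt_rankD_xP,
      rankD_xJ_lt_rankD_y, rankD_y_lt_rankD_y_iff, lt_self_iff_false, false_or, true_and] <;> omega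

theorem lead_le_one (h : IsGDBinomial m g g') (v : DVar m) : g v ≤ 1 := by
  classical
  cases h <;> simp only [Finsupp.coe_add, Pi.add_apply, single_apply] <;> split_ifs <;>
    subst_vars <;> simp_all <;> omega

theorem ne (h : IsGDBinomial m g g') : g' ≠ g :=
  fun hg => degRevLexLT_irrefl _ (hg ▸ h.lt)

theorem sub_mem_ker (K : Type*) [Field K] (h : IsGDBinomial m g g') :
    monomial g (1 : K) - monomial g' 1 ∈ RingHom.ker (piD K m) := by
  rw [RingHom.mem_ker, map_sub, piD_monomial, piD_monomial, h.weight_eq, sub_self]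

theorem le_of_pos {d : DVar m →₀ ℕ} (h : IsGDBinomial m g g')
    (hd : ∀ v, 0 < g v → 0 < d v) : g ≤ d := fun v =>
  (Nat.eq_zero_or_pos (g v)).elim (fun h0 => h0 ▸ Nat.zero_le _) fun hv =>
    (h.lead_le_one v).trans (hd v hv)

theorem monomial_mem_inGD (K : Type*) [Field K] (h : IsGDBinomial m g g') :
    monomial g (1 : K) ∈ inGD K m := by
  cases h <;> first | rw [← X_mul_X_mul_X] | rw [← X_mul_X]
  case ik_jl hij hjk hkl => exact .inl ⟨_, _, _, _, hij, hjk, hkl, .inl rfl⟩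
  case il_jk hij hjk hkl => exact .inl ⟨_, _, _, _, hij, hjk, hkl, .inr rfl⟩
  case ij_ik hij hjk => exact .inr <| .inl ⟨_, _, _, hij, hjk, .inl rfl⟩
  case j_ik hij hjk => exact .inr <| .inl ⟨_, _, _, hij, hjk, .inr <| .inl rfl⟩
  case k_ij hij hjk => exact .inr <| .inl ⟨_, _, _, hij, hjk, .inr <| .inr <| .inl rfl⟩
  case jk_yi hij hjk => exact .inr <| .inl ⟨_, _, _, hij, hjk, .inr <| .inr <| .inr <| .inl rfl⟩
  case ik_yj hij hjk => exact .inr <| .inl ⟨_, _, _, hij, hjk, .inr <| .inr <| .inr <| .inr rfl⟩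
  case i_j hij => exact .inr <| .inr <| .inl ⟨_, _, hij, .inl rfl⟩
  case j_yi hij => exact .inr <| .inr <| .inl ⟨_, _, hij, .inr <| .inl rfl⟩
  case ij_yi hij => exact .inr <| .inr <| .inl ⟨_, _, hij, .inr <| .inr <| .inl rfl⟩
  case ij_1n hij => exact .inr <| .inr <| .inl ⟨_, _, hij, .inr <| .inr <| .inr rfl⟩
  case i_1n i => exact .inr <| .inr <| .inr ⟨i, rfl⟩

end IsGDBinomial

theorem exists_isGDBinomial_of_mem_inGD {K : Type*} [Field K] {p : MvPolynomial (DVar m) K}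
    (hp : p ∈ inGD K m) : ∃ g g', IsGDBinomial m g g' ∧ p = monomial g 1 := by
  rcases hp with ⟨i, j, k, l, hij, hjk, hkl, rfl | rfl⟩ |
    ⟨i, j, k, hij, hjk, rfl | rfl | rfl | rfl | rfl⟩ | ⟨i, j, hij, rfl | rfl | rfl | rfl⟩ | ⟨i, rfl⟩
  all_goals first | rw [X_mul_X_mul_X] | rw [X_mul_X]
  exacts [⟨_, _, .ik_jl hij hjk hkl, rfl⟩, ⟨_, _, .il_jk hij hjk hkl, rfl⟩,
    ⟨_, _, .ij_ik hij hjk, rfl⟩, ⟨_, _, .j_ik hij hjk, rfl⟩, ⟨_, _, .k_ij hij hjk, rfl⟩,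
    ⟨_, _, .jk_yi hij hjk, rfl⟩, ⟨_, _, .ik_yj hij hjk, rfl⟩, ⟨_, _, .i_j hij, rfl⟩,
    ⟨_, _, .j_yi hij, rfl⟩, ⟨_, _, .ij_yi hij, rfl⟩, ⟨_, _, .ij_1n hij, rfl⟩, ⟨_, _, .i_1n i, rfl⟩]

variable {d e : DVar m →₀ ℕ}

theorem xJc_pos_of_weight_pos {t : Fin (m - 1)} (h : 0 < weight (piExp m) d (2 * t + 2)) :
    0 < d (xJc t) := by
  obtain ⟨v, hv, hw⟩ := exists_pos_of_weight_apply_pos _ h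
  cases v <;> simp [piExp, pos_iff_ne_zero, single_apply_eq_zero, Nat.add_eq_zero_iff] at hw <;>
    first | omega | (obtain rfl := Fin.ext hw; exact hv)

theorem odd_cases_of_weight_pos {t : Fin (m - 1)} (h : 0 < weight (piExp m) d (2 * t + 3)) :
    0 < d (xJ t) ∨ 0 < d (y t) ∨ (∃ s, ∃ hs : s < t, 0 < d (xP s t hs)) ∨
      ∃ u, ∃ hu : t < u, 0 < d (xP t u hu) := by
  obtain ⟨v, hv, hw⟩ := exists_pos_of_weight_apply_pos _ h
  rcases v with _ | _ | u | u | ⟨s, u, hsu⟩ | u <;>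
    simp [piExp, pos_iff_ne_zero, single_apply_eq_zero, Nat.add_eq_zero_iff] at hw
  · omega
  · obtain rfl := Fin.ext hw
    exact .inl hv
  · omega
  · by_cases hts : t = s
    · subst hts
      exact .inr <| .inr <| .inr ⟨u, hsu, hv⟩
    · obtain rfl := Fin.ext (hw (Fin.val_ne_of_ne hts))
      exact .inr <| .inr <| .inl ⟨s, hsu, hv⟩
  · obtain rfl : t = u := Fin.ext (by omega)
    exact .inr <| .inl hv

theorem one_cases_of_weight_pos (h : 0 < weight (piExp m) d 1) :
    0 < d x1 ∨ ∃ t, 0 < d (y t) := by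
  obtain ⟨v, hv, hw⟩ := exists_pos_of_weight_apply_pos _ h
  cases v <;> simp [piExp, Nat.add_eq_zero_iff] at hw <;>
    first | omega | exact .inl hv | exact .inr ⟨_, hv⟩

theorem n_cases_of_weight_pos (h : 0 < weight (piExp m) d (2 * m)) :
    0 < d xn ∨ ∃ t, 0 < d (y t) := by
  obtain ⟨v, hv, hw⟩ := exists_pos_of_weight_apply_pos _ h
  cases v <;> simp [piExp, pos_iff_ne_zero, single_apply_eq_zero, Nat.add_eq_zero_iff] at hw <;>
    first | omega | exact .inl hv | exact .inr ⟨_, hv⟩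

theorem xJ_pos_of_max {M : Fin (m - 1)} (hM : 0 < weight (piExp m) d (2 * M + 3))
    (hmax : ∀ t : Fin (m - 1), 0 < weight (piExp m) d (2 * t + 3) → t = M)
    (hy : ∀ t, d (y t) = 0) : 0 < d (xJ M) := by
  rcases odd_cases_of_weight_pos hM with hJ | hyM | ⟨s, hs, hP⟩ | ⟨u, hu, hP⟩
  · exact hJ
  · exact absurd hyM (by simp [hy])
  · exact absurd (hmax s (weight_apply_pos _ hP (by simp [piExp]))) hs.ne
  · exact absurd (hmax u (weight_apply_pos _ hP (by simp [piExp]))) hu.ne'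

def IsStandard (m : ℕ) (d : DVar m →₀ ℕ) : Prop :=
  ∀ ⦃g g'⦄, IsGDBinomial m g g' → ¬g ≤ d

namespace IsStandard

theorem mono (hd : IsStandard m d) (h : e ≤ d) : IsStandard m e :=
  fun _ _ hg hge => hd hg (hge.trans h)

theorem not_pos_pair (hd : IsStandard m d) {a b : DVar m} {g' : DVar m →₀ ℕ}
    (h : IsGDBinomial m (single a 1 + single b 1) g') (ha : 0 < d a) (hb : 0 < d b) : False := by
  classical
  refine hd h (h.le_of_pos fun v hv => ?_)
  simp only [Finsupp.coe_add, Pi.add_apply, single_apply] at hv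
  split_ifs at hv <;> simp_all

theorem not_pos_triple (hd : IsStandard m d) {a b c : DVar m} {g' : DVar m →₀ ℕ}
    (h : IsGDBinomial m (single a 1 + single b 1 + single c 1) g') (ha : 0 < d a) (hb : 0 < d b)
    (hc : 0 < d c) : False := by
  classical
  refine hd h (h.le_of_pos fun v hv => ?_)
  simp only [Finsupp.coe_add, Pi.add_apply, single_apply] at hv
  split_ifs at hv <;> simp_all

theorem y_pos_of_max (hd : IsStandard m d) {M t₀ : Fin (m - 1)}
    (hM : 0 < weight (piExp m) d (2 * M + 3))
    (hmax : ∀ t : Fin (m - 1), 0 < weight (piExp m) d (2 * t + 3) → t ≤ M) (ht₀ : 0 < d (y t₀)) :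
    0 < d (y M) := by
  have ht₀M : t₀ ≤ M := hmax t₀ (weight_apply_pos _ ht₀ (by simp [piExp]))
  rcases odd_cases_of_weight_pos hM with hJ | hy | ⟨s, hs, hP⟩ | ⟨u, hu, hP⟩
  · obtain rfl | hlt := ht₀M.eq_or_lt
    · exact ht₀
    · exact (hd.not_pos_pair (.j_yi hlt) hJ ht₀).elim
  · exact hy
  · obtain hlt | rfl | hgt := lt_trichotomy t₀ s
    · exact (hd.not_pos_pair (.jk_yi hlt hs) hP ht₀).elim
    · exact (hd.not_pos_pair (.ij_yi hs) hP ht₀).elim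
    · obtain rfl | hlt := ht₀M.eq_or_lt
      · exact ht₀
      · exact (hd.not_pos_pair (.ik_yj hgt hlt) hP ht₀).elim
  · exact absurd (hmax u (weight_apply_pos _ hP (by simp [piExp]))) hu.not_ge

theorem xP_pos_of_max (hd : IsStandard m d) {s M : Fin (m - 1)} (hsM : s < M)
    (hM : 0 < weight (piExp m) d (2 * M + 3)) (hs : 0 < weight (piExp m) d (2 * s + 3))
    (hmax : ∀ t : Fin (m - 1), 0 < weight (piExp m) d (2 * t + 3) → t ≤ M)
    (hmax₂ : ∀ t < M, 0 < weight (piExp m) d (2 * t + 3) → t ≤ s) (hy : ∀ t, d (y t) = 0) :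
    0 < d (xP s M hsM) := by
  have left {a b : Fin (m - 1)} (hab : a < b) (h : 0 < d (xP a b hab)) :
      0 < weight (piExp m) d (2 * a + 3) := weight_apply_pos _ h (by simp [piExp])
  have right {a b : Fin (m - 1)} (hab : a < b) (h : 0 < d (xP a b hab)) :
      0 < weight (piExp m) d (2 * b + 3) := weight_apply_pos _ h (by simp [piExp])
  have hy' (t : Fin (m - 1)) : ¬0 < d (y t) := by simp [hy]
  obtain hsM' | hJM | ⟨l, hls, hPl⟩ : 0 < d (xP s M hsM) ∨ 0 < d (xJ M) ∨
      ∃ l, ∃ hls : l < s, 0 < d (xP l M (hls.trans hsM)) := by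
    rcases odd_cases_of_weight_pos hM with hJ | hyM | ⟨l, hlM, hPl⟩ | ⟨u, hu, hP⟩
    · exact .inr (.inl hJ)
    · exact (hy' M hyM).elim
    · obtain hls | rfl | hsl := lt_trichotomy l s
      · exact .inr (.inr ⟨l, hls, hPl⟩)
      · exact .inl hPl
      · exact absurd (hmax₂ l hlM (left hlM hPl)) hsl.not_ge
    · exact absurd (hmax u (right hu hP)) hu.not_ge
  · exact hsM'
  all_goals
    obtain hsM' | hJs | ⟨x, hxs, hPx⟩ : 0 < d (xP s M hsM) ∨ 0 < d (xJ s) ∨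
        ∃ x, ∃ hxs : x < s, 0 < d (xP x s hxs) := by
      rcases odd_cases_of_weight_pos hs with hJ | hys | hP | ⟨u, hsu, hP⟩
      · exact .inr (.inl hJ)
      · exact (hy' s hys).elim
      · exact .inr (.inr hP)
      · obtain rfl | huM := (hmax u (right hsu hP)).eq_or_lt
        · exact .inl hP
        · exact absurd (hmax₂ u huM (right hsu hP)) hsu.not_ge
    · exact hsM'
  · exact (hd.not_pos_pair (.i_j hsM) hJs hJM).elim
  · exact (hd.not_pos_pair (.k_ij hxs hsM) hJM hPx).elim
  · exact (hd.not_pos_pair (.j_ik hls hsM) hJs hPl).elim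
  · obtain hlx | rfl | hxl := lt_trichotomy l x
    · exact (hd.not_pos_pair (.il_jk hlx hxs hsM) hPl hPx).elim
    · exact (hd.not_pos_pair (.ij_ik hxs hsM) hPx hPl).elim
    · exact (hd.not_pos_pair (.ik_jl hxl hls hsM) hPx hPl).elim

/-- If `x^e` had no `y`-variable, the exponents of `u_1` and `u_n` would force `x_1 x_n ∣ x^e`,
and then no variable of `x^e` could supply `u_t`. -/
theorem exists_y_pos (he : IsStandard m e) (hA : weight (piExp m) e = weight (piExp m) d)
    {t : Fin (m - 1)} (ht : 0 < d (y t)) : ∃ u, 0 < e (y u) := by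
  by_contra! hy
  have pos {c : ℕ} (hc : 0 < piExp m (y t) c) : 0 < weight (piExp m) e c :=
    hA ▸ weight_apply_pos _ ht hc
  have h1 : 0 < e x1 :=
    (one_cases_of_weight_pos (pos (by simp [piExp]))).resolve_right fun ⟨u, hu⟩ => (hy u).not_gt hu
  have hn : 0 < e xn :=
    (n_cases_of_weight_pos (pos (by simp [piExp]))).resolve_right fun ⟨u, hu⟩ => (hy u).not_gt hu
  rcases odd_cases_of_weight_pos (pos (c := 2 * t + 3) (by simp [piExp])) with
    hJ | hyt | ⟨s, hs, hP⟩ | ⟨u, hu, hP⟩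
  · exact he.not_pos_triple (.i_1n t) hJ h1 hn
  · exact (hy t).not_gt hyt
  · exact he.not_pos_triple (.ij_1n hs) hP h1 hn
  · exact he.not_pos_triple (.ij_1n hu) hP h1 hn

theorem exists_common_pos_of_odd (hd : IsStandard m d) (he : IsStandard m e)
    (hA : weight (piExp m) d = weight (piExp m) e)
    (hodd : ∃ t : Fin (m - 1), 0 < weight (piExp m) d (2 * t + 3)) :
    ∃ v, 0 < d v ∧ 0 < e v := by
  obtain ⟨M, hM, hmax⟩ := Set.exists_max_image _ id (Set.toFinite _) hodd
  replace hmax (t : Fin (m - 1)) (ht : 0 < weight (piExp m) d (2 * t + 3)) : t ≤ M := hmax t ht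
  by_cases hy : ∃ t, 0 < d (y t)
  · obtain ⟨t, ht⟩ := hy
    obtain ⟨u, hu⟩ := he.exists_y_pos hA.symm ht
    exact ⟨y M, hd.y_pos_of_max hM hmax ht,
      he.y_pos_of_max (hA ▸ hM) (hA ▸ hmax) hu⟩
  have hyd (t : Fin (m - 1)) : d (y t) = 0 := Nat.eq_zero_of_not_pos fun h => hy ⟨t, h⟩
  have hye (t : Fin (m - 1)) : e (y t) = 0 :=
    Nat.eq_zero_of_not_pos fun h => hy (hd.exists_y_pos hA h)
  by_cases hs : ∃ s < M, 0 < weight (piExp m) d (2 * s + 3)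
  · obtain ⟨s, ⟨hsM, hs⟩, hmax₂⟩ := Set.exists_max_image _ id (Set.toFinite _) hs
    replace hmax₂ (t) (htM : t < M) (ht : 0 < weight (piExp m) d (2 * t + 3)) : t ≤ s :=
      hmax₂ t ⟨htM, ht⟩
    exact ⟨xP s M hsM, hd.xP_pos_of_max hsM hM hs hmax hmax₂ hyd,
      he.xP_pos_of_max hsM (hA ▸ hM) (hA ▸ hs) (hA ▸ hmax) (hA ▸ hmax₂) hye⟩
  · push Not at hs
    have hmax' (t : Fin (m - 1)) (ht : 0 < weight (piExp m) d (2 * t + 3)) : t = M :=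
      (hmax t ht).eq_of_not_lt fun htM => (hs t htM).not_gt ht
    exact ⟨xJ M, xJ_pos_of_max hM hmax' hyd,
      xJ_pos_of_max (hA ▸ hM) (hA ▸ hmax') hye⟩

theorem exists_common_pos (hd : IsStandard m d) (he : IsStandard m e)
    (hA : weight (piExp m) d = weight (piExp m) e) (hd0 : d ≠ 0) : ∃ v, 0 < d v ∧ 0 < e v := by
  by_cases hodd : ∃ t : Fin (m - 1), 0 < weight (piExp m) d (2 * t + 3)
  · exact hd.exists_common_pos_of_odd he hA hodd
  push Not at hodd
  have no_odd {f : DVar m →₀ ℕ} (hf : weight (piExp m) f = weight (piExp m) d) {v : DVar m}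
      {t : Fin (m - 1)} (hv : 0 < piExp m v (2 * t + 3)) : f v = 0 :=
    Nat.eq_zero_of_le_zero ((le_weight_apply _ f hv).trans (hf ▸ hodd t))
  have no_y (t : Fin (m - 1)) : ¬0 < e (y t) :=
    (no_odd hA.symm (t := t) (by simp [piExp])).not_gt
  obtain ⟨v, hv⟩ := Finsupp.ne_iff.mp hd0
  replace hv : 0 < d v := Nat.pos_of_ne_zero hv
  have pos {c : ℕ} (hc : 0 < piExp m v c) : 0 < weight (piExp m) e c :=
    hA ▸ weight_apply_pos _ hv hc
  rcases v with _ | _ | t | t | ⟨s, t, hst⟩ | t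
  · exact ⟨x1, hv, (one_cases_of_weight_pos (pos (by simp [piExp]))).resolve_right
      fun ⟨t, ht⟩ => no_y t ht⟩
  · exact ⟨xn, hv, (n_cases_of_weight_pos (pos (by simp [piExp]))).resolve_right
      fun ⟨t, ht⟩ => no_y t ht⟩
  · exact absurd (no_odd rfl (t := t) (by simp [piExp])) hv.ne'
  · exact ⟨xJc t, hv, xJc_pos_of_weight_pos (pos (by simp [piExp]))⟩
  · exact absurd (no_odd rfl (t := s) (by simp [piExp])) hv.ne'
  · exact absurd (no_odd rfl (t := t) (by simp [piExp])) hv.ne'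

theorem eq_of_weight_eq (hd : IsStandard m d) (he : IsStandard m e)
    (hA : weight (piExp m) d = weight (piExp m) e) : d = e := by
  induction hn : degree d generalizing d e with
  | zero =>
    rw [degree_eq_zero_iff] at hn
    subst hn
    have := degree_le_degree_weight _ piExp_ne_zero e
    rw [← hA, map_zero, map_zero, Nat.le_zero, degree_eq_zero_iff] at this
    exact this.symm
  | succ n ih =>
    obtain ⟨v, hdv, hev⟩ := hd.exists_common_pos he hA (by rintro rfl; simp at hn)
    have hsub {f : DVar m →₀ ℕ} (hf : 0 < f v) : f - single v 1 + single v 1 = f :=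
      sub_add_single_one_cancel hf.ne'
    have key : d - single v 1 = e - single v 1 := by
      refine ih (hd.mono tsub_le_self) (he.mono tsub_le_self)
        (add_right_cancel (b := piExp m v) ?_) ?_
      · rw [weight_sub_single_add hdv.ne', weight_sub_single_add hev.ne', hA]
      · have := congrArg degree (hsub hdv)
        rw [map_add, degree_single, hn] at this
        omega
    rw [← hsub hdv, ← hsub hev, key]

end IsStandard

theorem exists_precEven_of_not_isStandard (he : ¬IsStandard m e) :
    ∃ e', weight (piExp m) e' = weight (piExp m) e ∧ precEven m e' e := by
  simp only [IsStandard, not_forall, not_not] at he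
  obtain ⟨g, g', hg, hge⟩ := he
  refine ⟨e - g + g', ?_, ?_⟩
  · rw [map_add, ← hg.weight_eq, ← map_add, tsub_add_cancel_of_le hge]
  · have := hg.lt.add_left (e - g)
    rwa [tsub_add_cancel_of_le hge] at this

theorem IsStandard.not_precEven (hd : IsStandard m d)
    (hA : weight (piExp m) e = weight (piExp m) d) : ¬precEven m e d := by
  have : IsStrictOrder _ (precEven m) := isStrictOrder_degRevLexLT rankD_injective
  refine (finite_setOf_weight_eq _ piExp_ne_zero (weight (piExp m) d)).not_rel_of_descent
    (P := IsStandard m) (fun f hf hPf => ?_) (fun f hf f' hf' hPf hPf' => ?_) rfl hd hA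
  · obtain ⟨f', hf', hlt⟩ := exists_precEven_of_not_isStandard hPf
    exact ⟨f', hf'.trans hf, hlt⟩
  · exact hPf.eq_of_weight_eq hPf' (hf.trans hf'.symm)

theorem not_isStandard_of_isLeadExp {K : Type*} [Field K] {f : MvPolynomial (DVar m) K}
    (hf : f ∈ RingHom.ker (piD K m)) (hd : IsLeadExp (precEven m) f d) : ¬IsStandard m d := by
  rw [RingHom.mem_ker, piD, dImage_eq_monomial] at hf
  obtain ⟨e, he, hed, hA⟩ := exists_weight_eq_of_aeval_eq_zero _ hf hd.1
  exact fun hstd => hstd.not_precEven hA (hd.2 e he hed)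

end DVar

theorem initial_ideal_GD_squarefree_general (K : Type*) [Field K] (m : ℕ) :
    initialIdeal (precEven m) (RingHom.ker (piD K m)) = Ideal.span (inGD K m) ∧
      ∀ p ∈ inGD K m, ∃ d : DVar m →₀ ℕ, p = monomial d (1 : K) ∧ ∀ v, d v ≤ 1 := by
  refine ⟨le_antisymm (Ideal.span_le.mpr ?_) (Ideal.span_le.mpr fun p hp => ?_), fun p hp => ?_⟩
  · rintro _ ⟨f, hf, -, d, hd, rfl⟩
    obtain ⟨g, g', hg, hgd⟩ : ∃ g g', DVar.IsGDBinomial m g g' ∧ g ≤ d := by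
      simpa [DVar.IsStandard] using DVar.not_isStandard_of_isLeadExp hf hd
    rw [← tsub_add_cancel_of_le hgd, ← mul_one (1 : K), ← monomial_mul]
    exact Ideal.mul_mem_left _ _ (Ideal.subset_span (hg.monomial_mem_inGD K))
  · obtain ⟨g, g', hg, rfl⟩ := DVar.exists_isGDBinomial_of_mem_inGD hp
    have hlead := isLeadExp_monomial_sub_monomial (K := K) hg.ne hg.lt
    exact Ideal.subset_span ⟨_, hg.sub_mem_ker K, hlead.ne_zero, g, hlead, rfl⟩
  · obtain ⟨g, g', hg, rfl⟩ := DVar.exists_isGDBinomial_of_mem_inGD hp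
    exact ⟨g, rfl, hg.lead_le_one⟩

/-- the initial ideal of `I_{D_{2m}}` with respect to `≻^even` is generated by
the explicit set `in(𝒢_{D_{2m}})` of first-written monomials of the binomials of
`𝒢_{D_{2m}}`, and each of these monomials is squarefree. -/
theorem initial_ideal_GD_squarefree (K : Type*) [Field K] (m : ℕ) (hm : 2 ≤ m) :
    initialIdeal (precEven m) (RingHom.ker (piD K m)) = Ideal.span (inGD K m) ∧
      ∀ p ∈ inGD K m, ∃ d : DVar m →₀ ℕ, p = monomial d (1 : K) ∧ ∀ v, d v ≤ 1 :=
  initial_ideal_GD_squarefree_general K m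
end

section
/- The binomials x_i x_j − x_{i,j}² (for i < j in J) and x_i x_1 x_n − y_i² (for i ∈ J) are indispensable binomials of I_{D_{2m}}: for every set B of binomials (differences of two monomials of R) whose generated ideal equals I_{D_{2m}}, and for all i < j in J, either x_i x_j − x_{i,j}² ∈ B or x_{i,j}² − x_i x_j ∈ B, and for all i ∈ J, either x_i x_1 x_n − y_i² ∈ B or y_i² − x_i x_1 x_n ∈ B. -/
open MvPolynomial

/-! The toric ideal is graded by `deg z = ∑ᵥ z v • w v`, where `u ^ w v = π (x v)`, and a
binomial lies in it exactly when its two monomials have the same degree. Suppose the degree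
class of `x ^ a` consists of `x ^ a` and `x ^ p` only, with `a` and `p` of disjoint support.
If `x ^ a - x ^ p` is written in terms of a generating set of binomials, some generator
`x ^ d - x ^ e` has `d ≤ a`; then `x ^ (a - d + e)` lies in the degree class of `a` and differs
from `x ^ a`, so it is `x ^ p`, and disjointness forces `d = a`, `e = p`. Both families in the
statement are of this kind: the only monomials of degree `u_i² u_j²` are `x_i x_j` and
`x_{i,j}²`, and the only ones of degree `u_i² u_1² u_n²` are `x_i x_1 x_n` and `y_i²`. -/

namespace Finsupp

theorem le_linearCombination_of_ne_zero {σ τ : Type*} {w : σ → τ →₀ ℕ} {z : σ →₀ ℕ} {v : σ}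
    (hv : z v ≠ 0) : w v ≤ linearCombination ℕ w z := by
  calc w v ≤ z v • w v := le_smul_of_one_le_left zero_le (Nat.one_le_iff_ne_zero.2 hv)
    _ ≤ z.sum fun u k => k • w u :=
      Finset.single_le_sum (f := fun u => z u • w u) (fun _ _ => zero_le) (mem_support_iff.2 hv)
    _ = linearCombination ℕ w z := (linearCombination_apply ℕ z).symm

theorem eq_sum_single_of_support_subset {σ M : Type*} [AddCommMonoid M] {z : σ →₀ M}
    {s : Finset σ} (h : z.support ⊆ s) : z = ∑ v ∈ s, single v (z v) := by
  conv_lhs => rw [← z.sum_single]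
  exact z.sum_of_support_subset h _ (by simp)

theorem eq_and_eq_of_le_of_fiber_eq_pair {σ M : Type*} [AddCommMonoid M]
    (deg : (σ →₀ ℕ) →+ M) {a p d e : σ →₀ ℕ} (hdisj : Disjoint a.support p.support)
    (hfiber : ∀ z, deg z = deg a → z = a ∨ z = p) (hde : d ≠ e) (hdeg : deg d = deg e)
    (hda : d ≤ a) : d = a ∧ e = p := by
  obtain ⟨c, rfl⟩ := exists_add_of_le hda
  have hce : c + e = p := by
    rcases hfiber (c + e) (by rw [map_add, map_add, hdeg, add_comm]) with h | h
    · rw [add_comm d] at h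
      exact absurd (add_left_cancel h).symm hde
    · exact h
  have hc : c = 0 := by
    have := hdisj.mono (support_mono le_add_self) (support_mono (hce ▸ le_self_add))
    exact support_eq_empty.1 (disjoint_self.1 this)
  subst hc
  simpa using hce

end Finsupp

namespace MvPolynomial

variable {σ τ R : Type*}

theorem map_monomial_one_of_map_X [CommSemiring R] {φ : MvPolynomial σ R →ₐ[R] MvPolynomial τ R}
    {w : σ → τ →₀ ℕ} (hφ : ∀ v, φ (X v) = monomial (w v) 1) (d : σ →₀ ℕ) :
    φ (monomial d 1) = monomial (Finsupp.linearCombination ℕ w d) 1 := by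
  rw [aeval_unique φ, Function.comp_def]
  simp only [hφ, aeval_monomial, map_one, one_mul, Finsupp.linearCombination_apply,
    monomial_finsupp_sum_index, monomial_pow, one_pow]

theorem exists_mem_support_le_of_mem_span [CommSemiring R] {B : Set (MvPolynomial σ R)}
    {f : MvPolynomial σ R} (hf : f ∈ Ideal.span B) {a : σ →₀ ℕ} (ha : a ∈ f.support) :
    ∃ b ∈ B, ∃ d ∈ b.support, d ≤ a := by
  classical
  induction hf using Submodule.span_induction generalizing a with
  | mem b hb => exact ⟨b, hb, a, ha, le_rfl⟩
  | zero => simp at ha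
  | add f g _ _ ihf ihg =>
    rcases Finset.mem_union.1 (support_add ha) with h | h
    exacts [ihf h, ihg h]
  | smul r f _ ih =>
    obtain ⟨c, -, a', ha', rfl⟩ := Finset.mem_add.1 (support_mul r f ha)
    obtain ⟨b, hb, d, hd, hda⟩ := ih ha'
    exact ⟨b, hb, d, hd, hda.trans le_add_self⟩

theorem sub_mem_or_sub_mem_of_fiber_eq_pair [CommRing R] [Nontrivial R]
    {φ : MvPolynomial σ R →ₐ[R] MvPolynomial τ R} {w : σ → τ →₀ ℕ}
    (hφ : ∀ v, φ (X v) = monomial (w v) 1) {B : Set (MvPolynomial σ R)}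
    (hbin : ∀ b ∈ B, ∃ d e : σ →₀ ℕ, d ≠ e ∧ b = monomial d 1 - monomial e 1)
    (hspan : Ideal.span B = RingHom.ker φ)
    {a p : σ →₀ ℕ} (hap : a ≠ p) (hdisj : Disjoint a.support p.support)
    (hfiber : ∀ z, Finsupp.linearCombination ℕ w z = Finsupp.linearCombination ℕ w a ↔
      z = a ∨ z = p) :
    monomial a 1 - monomial p 1 ∈ B ∨ monomial p 1 - monomial a 1 ∈ B := by
  classical
  have mem_span_iff {d e : σ →₀ ℕ} : monomial d (1 : R) - monomial e 1 ∈ Ideal.span B ↔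
      Finsupp.linearCombination ℕ w d = Finsupp.linearCombination ℕ w e := by
    rw [hspan, RingHom.mem_ker, map_sub, map_monomial_one_of_map_X hφ,
      map_monomial_one_of_map_X hφ, sub_eq_zero, (monomial_left_injective one_ne_zero).eq_iff]
  have ha : a ∈ (monomial a (1 : R) - monomial p 1).support := by
    simp [mem_support_iff, coeff_monomial, hap.symm]
  obtain ⟨b, hb, d', hd', hd'a⟩ :=
    exists_mem_support_le_of_mem_span (mem_span_iff.2 ((hfiber p).2 (Or.inr rfl)).symm) ha
  obtain ⟨d, e, hde, rfl⟩ := hbin b hb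
  have hdeg := mem_span_iff.1 (Ideal.subset_span hb)
  have key {d e : σ →₀ ℕ} := Finsupp.eq_and_eq_of_le_of_fiber_eq_pair (d := d) (e := e)
    (Finsupp.linearCombination ℕ w).toAddMonoidHom hdisj (fun z => (hfiber z).1)
  rcases Finset.mem_union.1 (support_sub _ _ _ hd') with h | h
  · obtain ⟨rfl, rfl⟩ := key hde hdeg (Finset.mem_singleton.1 (support_monomial_subset h) ▸ hd'a)
    exact Or.inl hb
  · obtain ⟨rfl, rfl⟩ := key hde.symm hdeg.symm
      (Finset.mem_singleton.1 (support_monomial_subset h) ▸ hd'a)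
    exact Or.inr hb

end MvPolynomial

namespace DVar

variable {m : ℕ}

noncomputable def weight (m : ℕ) : DVar m → ℕ →₀ ℕ
  | x1 => .single 1 2
  | xn => .single (2 * m) 2
  | xJ t => .single (2 * t.val + 3) 2
  | xJc t => .single (2 * t.val + 2) 1
  | xP s t _ => .single (2 * s.val + 3) 1 + .single (2 * t.val + 3) 1
  | y t => .single (2 * t.val + 3) 1 + .single 1 1 + .single (2 * m) 1

theorem piD_X (K : Type*) [Field K] (v : DVar m) :
    piD K m (X v) = monomial (weight m v) 1 := by
  rw [piD, aeval_X]
  cases v <;> simp [dImage, weight, X, monomial_mul, monomial_pow, Finsupp.smul_single]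

theorem eq_of_weight_le_xJ_add_xJ {i j : Fin (m - 1)} (hij : i < j) {v : DVar m}
    (hv : weight m v ≤ weight m (xJ i) + weight m (xJ j)) :
    v = xJ i ∨ v = xJ j ∨ v = xP i j hij := by
  rw [Fin.lt_def] at hij
  have hle (n : ℕ) := Finsupp.le_def.1 hv n
  cases v with
  | xJ t =>
    have h := hle (2 * t + 3)
    simp only [weight, Finsupp.add_apply, Finsupp.single_apply] at h
    simp only [xJ.injEq, reduceCtorEq, Fin.ext_iff, or_false]
    split_ifs at h <;> omega
  | xP s t hst =>
    rw [Fin.lt_def] at hst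
    have hs := hle (2 * s + 3)
    have ht := hle (2 * t + 3)
    simp only [weight, Finsupp.add_apply, Finsupp.single_apply] at hs ht
    simp only [xP.injEq, reduceCtorEq, Fin.ext_iff, false_or]
    split_ifs at hs ht <;> omega
  | x1 | y _ =>
    have h := hle 1
    simp only [weight, Finsupp.add_apply, Finsupp.single_apply] at h
    split_ifs at h <;> omega
  | xn =>
    have h := hle (2 * m)
    simp only [weight, Finsupp.add_apply, Finsupp.single_apply] at h
    split_ifs at h <;> omega
  | xJc t =>
    have h := hle (2 * t + 2)
    simp only [weight, Finsupp.add_apply, Finsupp.single_apply] at h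
    split_ifs at h <;> omega

theorem eq_of_weight_le_xJ_add_x1_add_xn {i : Fin (m - 1)} {v : DVar m}
    (hv : weight m v ≤ weight m (xJ i) + weight m x1 + weight m xn) :
    v = xJ i ∨ v = x1 ∨ v = xn ∨ v = y i := by
  have hle (n : ℕ) := Finsupp.le_def.1 hv n
  cases v with
  | x1 | xn => simp
  | xJ t | y t =>
    have h := hle (2 * t + 3)
    simp only [weight, Finsupp.add_apply, Finsupp.single_apply] at h
    simp only [xJ.injEq, y.injEq, reduceCtorEq, Fin.ext_iff, false_or, or_false]
    split_ifs at h <;> omega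
  | xP s t hst =>
    rw [Fin.lt_def] at hst
    have hs := hle (2 * s + 3)
    have ht := hle (2 * t + 3)
    simp only [weight, Finsupp.add_apply, Finsupp.single_apply] at hs ht
    split_ifs at hs ht <;> omega
  | xJc t =>
    have h := hle (2 * t + 2)
    have ht := t.isLt
    simp only [weight, Finsupp.add_apply, Finsupp.single_apply] at h
    split_ifs at h <;> omega

theorem linearCombination_weight_eq_xJ_add_xJ_iff {i j : Fin (m - 1)} (hij : i < j)
    (z : DVar m →₀ ℕ) :
    Finsupp.linearCombination ℕ (weight m) z =
        Finsupp.linearCombination ℕ (weight m) (.single (xJ i) 1 + .single (xJ j) 1) ↔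
      z = .single (xJ i) 1 + .single (xJ j) 1 ∨ z = .single (xP i j hij) 2 := by
  classical
  have ha : Finsupp.linearCombination ℕ (weight m) (.single (xJ i) 1 + .single (xJ j) 1) =
      weight m (xJ i) + weight m (xJ j) := by simp
  have hp : Finsupp.linearCombination ℕ (weight m) (.single (xP i j hij) 2) =
      weight m (xJ i) + weight m (xJ j) := by
    simp [weight, smul_add, Finsupp.smul_single]
  rw [ha]
  refine ⟨fun hz => ?_, by rintro (rfl | rfl); exacts [ha, hp]⟩
  have hsupp : z.support ⊆ {xJ i, xJ j, xP i j hij} := fun v hv => by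
    simpa using eq_of_weight_le_xJ_add_xJ hij
      (hz ▸ Finsupp.le_linearCombination_of_ne_zero (Finsupp.mem_support_iff.1 hv))
  obtain ⟨α, β, γ, rfl⟩ :
      ∃ α β γ, z = .single (xJ i) α + .single (xJ j) β + .single (xP i j hij) γ := by
    refine ⟨z (xJ i), z (xJ j), z (xP i j hij),
      (Finsupp.eq_sum_single_of_support_subset hsupp).trans ?_⟩
    rw [Finset.sum_insert (by simp [hij.ne]), Finset.sum_pair (by simp), add_assoc]
  have hij' : i.val < j.val := hij
  have hi := DFunLike.congr_fun hz (2 * i.val + 3)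
  have hj := DFunLike.congr_fun hz (2 * j.val + 3)
  simp [weight, hij'.ne, hij'.ne'] at hi hj
  obtain ⟨rfl, rfl, rfl⟩ | ⟨rfl, rfl, rfl⟩ : α = 1 ∧ β = 1 ∧ γ = 0 ∨ α = 0 ∧ β = 0 ∧ γ = 2 := by
    omega
  exacts [Or.inl (by simp), Or.inr (by simp)]

theorem linearCombination_weight_eq_xJ_add_x1_add_xn_iff (i : Fin (m - 1)) (z : DVar m →₀ ℕ) :
    Finsupp.linearCombination ℕ (weight m) z = Finsupp.linearCombination ℕ (weight m)
        (.single (xJ i) 1 + .single x1 1 + .single xn 1) ↔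
      z = .single (xJ i) 1 + .single x1 1 + .single xn 1 ∨ z = .single (y i) 2 := by
  classical
  have ha : Finsupp.linearCombination ℕ (weight m)
      (.single (xJ i) 1 + .single x1 1 + .single xn 1) =
        weight m (xJ i) + weight m x1 + weight m xn := by simp
  have hp : Finsupp.linearCombination ℕ (weight m) (.single (y i) 2) =
      weight m (xJ i) + weight m x1 + weight m xn := by
    simp [weight, smul_add, Finsupp.smul_single]
  rw [ha]
  refine ⟨fun hz => ?_, by rintro (rfl | rfl); exacts [ha, hp]⟩
  have hsupp : z.support ⊆ {xJ i, x1, xn, y i} := fun v hv => by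
    simpa using eq_of_weight_le_xJ_add_x1_add_xn
      (hz ▸ Finsupp.le_linearCombination_of_ne_zero (Finsupp.mem_support_iff.1 hv))
  obtain ⟨α, β, γ, δ, rfl⟩ : ∃ α β γ δ,
      z = .single (xJ i) α + .single x1 β + .single xn γ + .single (y i) δ := by
    refine ⟨z (xJ i), z x1, z xn, z (y i),
      (Finsupp.eq_sum_single_of_support_subset hsupp).trans ?_⟩
    rw [Finset.sum_insert (by simp), Finset.sum_insert (by simp), Finset.sum_pair (by simp),
      add_assoc, add_assoc]
  have hodd : 2 * i.val + 3 ≠ 2 * m := by omega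
  have hi := DFunLike.congr_fun hz (2 * i.val + 3)
  have h1 := DFunLike.congr_fun hz 1
  have hn := DFunLike.congr_fun hz (2 * m)
  simp [weight, hodd, hodd.symm] at hi h1 hn
  obtain ⟨rfl, rfl, rfl, rfl⟩ | ⟨rfl, rfl, rfl, rfl⟩ :
      α = 1 ∧ β = 1 ∧ γ = 1 ∧ δ = 0 ∨ α = 0 ∧ β = 0 ∧ γ = 0 ∧ δ = 2 := by
    omega
  exacts [Or.inl (by simp), Or.inr (by simp)]

end DVar

theorem GD_indispensable_general (K : Type*) [Field K] (m : ℕ)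
    (B : Set (MvPolynomial (DVar m) K))
    (hbin : ∀ b ∈ B, ∃ d e : DVar m →₀ ℕ, d ≠ e ∧
      b = monomial d (1 : K) - monomial e (1 : K))
    (hspan : Ideal.span B = RingHom.ker (piD K m)) :
    (∀ (i j : Fin (m - 1)) (hij : i < j),
        X (DVar.xJ i) * X (DVar.xJ j) - X (DVar.xP i j hij) ^ 2 ∈ B ∨
        X (DVar.xP i j hij) ^ 2 - X (DVar.xJ i) * X (DVar.xJ j) ∈ B) ∧
    (∀ i : Fin (m - 1),
        X (DVar.xJ i) * X DVar.x1 * X DVar.xn - X (DVar.y i) ^ 2 ∈ B ∨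
        X (DVar.y i) ^ 2 - X (DVar.xJ i) * X DVar.x1 * X DVar.xn ∈ B) := by
  have key {a p : DVar m →₀ ℕ} :=
    sub_mem_or_sub_mem_of_fiber_eq_pair (a := a) (p := p) (DVar.piD_X K) hbin hspan
  simp only [X, monomial_mul, mul_one, monomial_pow, one_pow, Finsupp.smul_single, smul_eq_mul]
  refine ⟨fun i j hij => key ?_ ?_ (DVar.linearCombination_weight_eq_xJ_add_xJ_iff hij),
    fun i => key ?_ ?_ (DVar.linearCombination_weight_eq_xJ_add_x1_add_xn_iff i)⟩
  · exact fun h => by simpa using DFunLike.congr_fun h (DVar.xP i j hij)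
  · simp [Finset.disjoint_singleton_right]
  · exact fun h => by simpa using DFunLike.congr_fun h (DVar.y i)
  · simp [Finset.disjoint_singleton_right]

/-- the binomials `x_i x_j − x_{i,j}²` (`i < j` in `J`) and
`x_i x_1 x_n − y_i²` (`i ∈ J`) are indispensable binomials of `I_{D_{2m}}`: every set of
binomials generating the toric ideal contains each of them or its negative. -/
theorem GD_indispensable (K : Type*) [Field K] (m : ℕ) (hm : 2 ≤ m)
    (B : Set (MvPolynomial (DVar m) K))
    (hbin : ∀ b ∈ B, ∃ d e : DVar m →₀ ℕ, d ≠ e ∧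
      b = monomial d (1 : K) - monomial e (1 : K))
    (hspan : Ideal.span B = RingHom.ker (piD K m)) :
    (∀ (i j : Fin (m - 1)) (hij : i < j),
        X (DVar.xJ i) * X (DVar.xJ j) - X (DVar.xP i j hij) ^ 2 ∈ B ∨
        X (DVar.xP i j hij) ^ 2 - X (DVar.xJ i) * X (DVar.xJ j) ∈ B) ∧
    (∀ i : Fin (m - 1),
        X (DVar.xJ i) * X DVar.x1 * X DVar.xn - X (DVar.y i) ^ 2 ∈ B ∨
        X (DVar.y i) ^ 2 - X (DVar.xJ i) * X DVar.x1 * X DVar.xn ∈ B) :=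
  GD_indispensable_general K m B hbin hspan
end
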